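/- Rank-1 homotopy invariance of iterated integrals of 1-forms: if γ and δ are rank-1 homotopic 1-paths in U, then for every k ≥ 1 and all smooth maps ω₁,…,ω_k : U → (E →L[ℝ] A), the iterated integrals along γ and along δ coincide: ⟨ω₁⋯ω_k, γ⟩ = ⟨ω₁⋯ω_k, δ⟩. (This is the invariance underlying the well-definedness of the holonomy functor Hol¹_ω on 1-tracks.) -/

import Mathlib

open MeasureTheory

variable {E : Type*} [NormedAddCommGroup E] [NormedSpace ℝ E] [FiniteDimensional ℝ E]
variable {A : Type*} [NormedRing A] [NormedAlgebra ℝ A] [CompleteSpace A]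

/-- A 1-path in `U ⊆ E`: a smooth map `γ : ℝ → E` with values in `U` that is constant
on `(-∞, ε]` and on `[1 - ε, ∞)` for some `ε > 0`. -/
def IsPathIn (U : Set E) (γ : ℝ → E) : Prop :=
  ContDiff ℝ (⊤ : ℕ∞) γ ∧ (∀ t, γ t ∈ U) ∧
    ∃ ε > (0 : ℝ), (∀ t ≤ ε, γ t = γ 0) ∧ (∀ t, 1 - ε ≤ t → γ t = γ 1)

/-- A rank-1 homotopy in `U`: a smooth map `h : ℝ × ℝ → E` with values in `U`, constant
in `t` near `t = 0` and `t = 1`, whose images at `t = 0` and `t = 1` are single points,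
and whose Fréchet derivative has rank at most 1 at every point. -/
def IsRank1HomotopyIn (U : Set E) (h : ℝ × ℝ → E) : Prop :=
  ContDiff ℝ (⊤ : ℕ∞) h ∧ (∀ p, h p ∈ U) ∧
    (∃ ε > (0 : ℝ),
      (∀ s t, t ≤ ε → h (s, t) = h (s, 0)) ∧
      (∀ s t, 1 - ε ≤ t → h (s, t) = h (s, 1))) ∧
    (∀ s s', h (s, 0) = h (s', 0)) ∧ (∀ s s', h (s, 1) = h (s', 1)) ∧
    ∀ p : ℝ × ℝ,
      Module.finrank ℝ (LinearMap.range (fderiv ℝ h p).toLinearMap) ≤ 1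

/-- Two 1-paths in `U` are rank-1 homotopic if they are joined by a rank-1 homotopy
in `U`. -/
def Rank1HomotopicIn (U : Set E) (γ δ : ℝ → E) : Prop :=
  ∃ h : ℝ × ℝ → E, IsRank1HomotopyIn U h ∧
    (∀ t, h (0, t) = γ t) ∧ (∀ t, h (1, t) = δ t)

/-- The simplex `{t : ℝᵏ | 0 ≤ t 0 ≤ ⋯ ≤ t (k-1) ≤ 1}`. -/
def unitSimplexSet (k : ℕ) : Set (Fin k → ℝ) :=
  {t | Monotone t ∧ ∀ i, t i ∈ Set.Icc (0 : ℝ) 1}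

/-- The iterated integral `⟨ω₁ ⋯ ω_k, γ⟩` of a list `ω = [ω₁, …, ω_k]` of `A`-valued
1-forms on `E` along a 1-path `γ`: the Bochner integral of the ordered product
`ω₁ (γ t₁) (γ' t₁) ⋯ ω_k (γ t_k) (γ' t_k)` over the simplex `0 ≤ t₁ ≤ ⋯ ≤ t_k ≤ 1`.
For `k = 0` it equals `1`. -/
noncomputable def pathIterInt (ω : List (E → (E →L[ℝ] A))) (γ : ℝ → E) : A :=
  ∫ t in unitSimplexSet ω.length,
    (List.ofFn fun i => ω.get i (γ (t i)) (deriv γ (t i))).prod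


set_option linter.unusedSectionVars false

section Rank1Aux


theorem hasFDerivAt_of_partials {f f₁ f₂ : ℝ × ℝ → A}
    (h₁ : ∀ p : ℝ × ℝ, HasDerivAt (fun x => f (x, p.2)) (f₁ p) p.1)
    (h₂ : ∀ p : ℝ × ℝ, HasDerivAt (fun y => f (p.1, y)) (f₂ p) p.2)
    (hc₁ : Continuous f₁) (hc₂ : Continuous f₂) (p : ℝ × ℝ) :
    HasFDerivAt f ((ContinuousLinearMap.fst ℝ ℝ ℝ).smulRight (f₁ p) +
      (ContinuousLinearMap.snd ℝ ℝ ℝ).smulRight (f₂ p)) p := by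
  rw [hasFDerivAt_iff_isLittleO_nhds_zero, Asymptotics.isLittleO_iff]
  intro ε hε
  have hε2 : (0:ℝ) < ε / 2 := by linarith
  obtain ⟨δ₁, hδ₁, H₁⟩ := Metric.continuous_iff.1 hc₁ p (ε/2) hε2
  obtain ⟨δ₂, hδ₂, H₂⟩ := Metric.continuous_iff.1 hc₂ p (ε/2) hε2
  have hδ : (0:ℝ) < min δ₁ δ₂ := lt_min hδ₁ hδ₂
  filter_upwards [Metric.ball_mem_nhds (0 : ℝ × ℝ) hδ] with q hq
  obtain ⟨x, y⟩ := q
  obtain ⟨px, py⟩ := p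
  simp only [Metric.mem_ball, dist_zero_right, Prod.norm_def, Real.norm_eq_abs,
    sup_lt_iff, lt_min_iff] at hq
  -- first horizontal piece
  have hint1 : IntervalIntegrable (fun u => f₁ (u, py + y)) volume px (px + x) :=
    (hc₁.comp (continuous_id.prodMk continuous_const)).intervalIntegrable _ _
  have ftc1 : (∫ u in px..px + x, f₁ (u, py + y)) = f (px + x, py + y) - f (px, py + y) := by
    exact intervalIntegral.integral_eq_sub_of_hasDerivAt (fun u _ => by simpa using h₁ (u, py + y)) hint1
  have ftc2 : (∫ v in py..py + y, f₂ (px, v)) = f (px, py + y) - f (px, py) := by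
    refine intervalIntegral.integral_eq_sub_of_hasDerivAt (fun v _ => by simpa using h₂ (px, v)) ?_
    exact (hc₂.comp (continuous_const.prodMk continuous_id)).intervalIntegrable _ _
  have e1 : f (px + x, py + y) - f (px, py + y) - x • f₁ (px, py)
      = ∫ u in px..px + x, (f₁ (u, py + y) - f₁ (px, py)) := by
    rw [intervalIntegral.integral_sub hint1 intervalIntegrable_const, ftc1,
      intervalIntegral.integral_const]
    simp
  have e2 : f (px, py + y) - f (px, py) - y • f₂ (px, py)
      = ∫ v in py..py + y, (f₂ (px, v) - f₂ (px, py)) := by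
    have hint2 : IntervalIntegrable (fun v => f₂ (px, v)) volume py (py + y) :=
      (hc₂.comp (continuous_const.prodMk continuous_id)).intervalIntegrable _ _
    rw [intervalIntegral.integral_sub hint2 intervalIntegrable_const, ftc2,
      intervalIntegral.integral_const]
    simp
  have b1 : ‖f (px + x, py + y) - f (px, py + y) - x • f₁ (px, py)‖ ≤ ε / 2 * |x| := by
    rw [e1]
    have := intervalIntegral.norm_integral_le_of_norm_le_const
      (C := ε / 2) (a := px) (b := px + x) (f := fun u => f₁ (u, py + y) - f₁ (px, py)) ?_
    · simpa [abs_of_nonneg, add_sub_cancel_left] using this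
    · intro u hu
      have hu' : |u - px| ≤ |x| := by
        rcases Set.mem_uIoc.1 hu with h | h <;>
          · rw [abs_le]; constructor <;> [nlinarith [abs_nonneg x, le_abs_self x, neg_abs_le x];
              nlinarith [abs_nonneg x, le_abs_self x, neg_abs_le x]]
      have : dist (u, py + y) (px, py) < δ₁ := by
        rw [Prod.dist_eq, sup_lt_iff]
        constructor
        · rw [Real.dist_eq]; exact lt_of_le_of_lt hu' hq.1.1
        · rw [Real.dist_eq]; simpa using hq.1.2
      have := H₁ _ this
      rw [dist_eq_norm] at this
      exact le_of_lt this
  have b2 : ‖f (px, py + y) - f (px, py) - y • f₂ (px, py)‖ ≤ ε / 2 * |y| := by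
    rw [e2]
    have := intervalIntegral.norm_integral_le_of_norm_le_const
      (C := ε / 2) (a := py) (b := py + y) (f := fun v => f₂ (px, v) - f₂ (px, py)) ?_
    · simpa [abs_of_nonneg, add_sub_cancel_left] using this
    · intro v hv
      have hv' : |v - py| ≤ |y| := by
        rcases Set.mem_uIoc.1 hv with h | h <;>
          · rw [abs_le]; constructor <;> [nlinarith [abs_nonneg y, le_abs_self y, neg_abs_le y];
              nlinarith [abs_nonneg y, le_abs_self y, neg_abs_le y]]
      have : dist (px, v) (px, py) < δ₂ := by
        rw [Prod.dist_eq, sup_lt_iff]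
        refine ⟨by simpa using hδ₂, ?_⟩
        rw [Real.dist_eq]; exact lt_of_le_of_lt hv' hq.2.2
      have := H₂ _ this
      rw [dist_eq_norm] at this
      exact le_of_lt this
  have key : f ((px, py) + (x, y)) - f (px, py)
      - ((ContinuousLinearMap.fst ℝ ℝ ℝ).smulRight (f₁ (px, py)) +
        (ContinuousLinearMap.snd ℝ ℝ ℝ).smulRight (f₂ (px, py))) (x, y)
      = (f (px + x, py + y) - f (px, py + y) - x • f₁ (px, py))
        + (f (px, py + y) - f (px, py) - y • f₂ (px, py)) := by
    simp [Prod.mk_add_mk]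
    abel
  rw [key]
  calc ‖_ + _‖ ≤ ε / 2 * |x| + ε / 2 * |y| := norm_add_le_of_le b1 b2
    _ ≤ ε * ‖(x, y)‖ := by
        rw [Prod.norm_def]
        simp only [Real.norm_eq_abs]
        have h1 : |x| ≤ max |x| |y| := le_max_left _ _
        have h2 : |y| ≤ max |x| |y| := le_max_right _ _
        nlinarith


theorem exists_parallel {T : ℝ × ℝ →L[ℝ] E}
    (hT : Module.finrank ℝ (LinearMap.range T.toLinearMap) ≤ 1) :
    ∃ (v : E) (a b : ℝ), T (1, 0) = a • v ∧ T (0, 1) = b • v := by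
  obtain ⟨v₀, hv₀⟩ := finrank_le_one_iff.1 hT
  obtain ⟨a, ha⟩ := hv₀ ⟨T (1, 0), LinearMap.mem_range.2 ⟨(1, 0), rfl⟩⟩
  obtain ⟨b, hb⟩ := hv₀ ⟨T (0, 1), LinearMap.mem_range.2 ⟨(0, 1), rfl⟩⟩
  refine ⟨(v₀ : E), a, b, ?_, ?_⟩
  · simpa using congrArg (Subtype.val) ha.symm
  · simpa using congrArg (Subtype.val) hb.symm

/-- the "forms commute" identity coming from rank ≤ 1 -/
theorem forms_commute {T : ℝ × ℝ →L[ℝ] E}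
    (hT : Module.finrank ℝ (LinearMap.range T.toLinearMap) ≤ 1)
    (w w' : E → (E →L[ℝ] A)) (x : E) :
    w x (T (1, 0)) * w' x (T (0, 1)) = w x (T (0, 1)) * w' x (T (1, 0)) := by
  obtain ⟨v, a, b, h1, h2⟩ := exists_parallel hT
  rw [h1, h2]
  simp only [_root_.map_smul, ContinuousLinearMap.map_smul, smul_mul_smul_comm]
  rw [mul_comm a b]

/-- symmetric-bilinear-on-parallel identity -/
theorem bilin_parallel {T : ℝ × ℝ →L[ℝ] E}
    (hT : Module.finrank ℝ (LinearMap.range T.toLinearMap) ≤ 1)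
    (B : E →L[ℝ] E →L[ℝ] A) :
    B (T (1, 0)) (T (0, 1)) = B (T (0, 1)) (T (1, 0)) := by
  obtain ⟨v, a, b, h1, h2⟩ := exists_parallel hT
  rw [h1, h2]
  simp only [_root_.map_smul, ContinuousLinearMap.map_smul, ContinuousLinearMap.smul_apply]
  rw [smul_comm]


/-- `t`-component of the pullback of the form `w` along `h`. -/
noncomputable def QQ (w : E → (E →L[ℝ] A)) (h : ℝ × ℝ → E) (p : ℝ × ℝ) : A :=
  w (h p) (fderiv ℝ h p (0, 1))

/-- `s`-component of the pullback of the form `w` along `h`. -/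
noncomputable def PP (w : E → (E →L[ℝ] A)) (h : ℝ × ℝ → E) (p : ℝ × ℝ) : A :=
  w (h p) (fderiv ℝ h p (1, 0))

section
variable {U : Set E} {h : ℝ × ℝ → E} {w : E → (E →L[ℝ] A)}

theorem continuous_QQ (hU : IsOpen U) (hh : ContDiff ℝ (⊤ : ℕ∞) h) (hmem : ∀ p, h p ∈ U)
    (hw : ContDiffOn ℝ (⊤ : ℕ∞) w U) : Continuous (QQ w h) := by
  have hDh : Continuous (fderiv ℝ h) := (hh.fderiv_right (m := (⊤ : ℕ∞)) (by simp)).continuous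
  have hwc : Continuous fun p => w (h p) :=
    hw.continuousOn.comp_continuous hh.continuous hmem
  exact hwc.clm_apply (hDh.clm_apply continuous_const)

theorem continuous_PP (hU : IsOpen U) (hh : ContDiff ℝ (⊤ : ℕ∞) h) (hmem : ∀ p, h p ∈ U)
    (hw : ContDiffOn ℝ (⊤ : ℕ∞) w U) : Continuous (PP w h) := by
  have hDh : Continuous (fderiv ℝ h) := (hh.fderiv_right (m := (⊤ : ℕ∞)) (by simp)).continuous
  have hwc : Continuous fun p => w (h p) :=
    hw.continuousOn.comp_continuous hh.continuous hmem
  exact hwc.clm_apply (hDh.clm_apply continuous_const)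

theorem exists_hasFDerivAt_QQ_PP (hU : IsOpen U) (hh : ContDiff ℝ (⊤ : ℕ∞) h)
    (hmem : ∀ p, h p ∈ U) (hw : ContDiffOn ℝ (⊤ : ℕ∞) w U)
    (hrank : ∀ p : ℝ × ℝ,
      Module.finrank ℝ (LinearMap.range (fderiv ℝ h p).toLinearMap) ≤ 1)
    (p : ℝ × ℝ) :
    ∃ qd pd : ℝ × ℝ →L[ℝ] A, HasFDerivAt (QQ w h) qd p ∧ HasFDerivAt (PP w h) pd p ∧
      qd (1, 0) = pd (0, 1) := by
  have hD : ∀ q, HasFDerivAt h (fderiv ℝ h q) q := fun q =>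
    ((hh.differentiable (by simp)) q).hasFDerivAt
  have hD2 : HasFDerivAt (fderiv ℝ h) (fderiv ℝ (fderiv ℝ h) p) p :=
    (((hh.fderiv_right (m := (⊤ : ℕ∞)) (by simp)).differentiable (by simp)) p).hasFDerivAt
  have hwd : HasFDerivAt w (fderiv ℝ w (h p)) (h p) := by
    have := ((hw.differentiableOn (by simp)).differentiableAt (hU.mem_nhds (hmem p)))
    exact this.hasFDerivAt
  -- derivative of q ↦ w (h q)
  have hc : HasFDerivAt (fun q => w (h q)) ((fderiv ℝ w (h p)).comp (fderiv ℝ h p)) p :=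
    hwd.comp p (hD p)
  -- derivative of q ↦ fderiv ℝ h q v
  have hu : ∀ v : ℝ × ℝ, HasFDerivAt (fun q => fderiv ℝ h q v)
      ((ContinuousLinearMap.apply ℝ E v).comp (fderiv ℝ (fderiv ℝ h) p)) p := fun v =>
    (ContinuousLinearMap.apply ℝ E v).hasFDerivAt.comp p hD2
  refine ⟨_, _, hc.clm_apply (hu (0, 1)), hc.clm_apply (hu (1, 0)), ?_⟩
  have hsymm : ∀ v v' : ℝ × ℝ, fderiv ℝ (fderiv ℝ h) p v v' = fderiv ℝ (fderiv ℝ h) p v' v :=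
    second_derivative_symmetric hD hD2
  simp only [ContinuousLinearMap.add_apply, ContinuousLinearMap.coe_comp', Function.comp_apply,
    ContinuousLinearMap.flip_apply, ContinuousLinearMap.apply_apply]
  rw [hsymm (1, 0) (0, 1)]
  congr 1
  exact bilin_parallel (hrank p) (fderiv ℝ w (h p))

theorem fderiv_eq_zero_strip {ε : ℝ} (hε : 0 < ε) {c : ℝ} {S : Set ℝ} (hS : IsOpen S)
    (hcS : c ∈ S) (hconst : ∀ q : ℝ × ℝ, q.2 ∈ S → h q = h (0, c)) (x : ℝ) :
    fderiv ℝ h (x, c) = 0 := by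
  have hev : h =ᶠ[nhds (x, c)] fun _ => h (0, c) := by
    have hopen : IsOpen ((Set.univ : Set ℝ) ×ˢ S) := isOpen_univ.prod hS
    filter_upwards [hopen.mem_nhds (by exact ⟨trivial, hcS⟩)] with q hq
    exact hconst q hq.2
  rw [hev.fderiv_eq, fderiv_fun_const]
  rfl

end
noncomputable def Psi (W : ℕ → E → (E →L[ℝ] A)) (h : ℝ × ℝ → E) : ℕ → ℝ × ℝ → A
  | 0 => fun _ => 1
  | m + 1 => fun p => ∫ t in (0:ℝ)..p.2, Psi W h m (p.1, t) * QQ (W m) h (p.1, t)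

noncomputable def psiP (W : ℕ → E → (E →L[ℝ] A)) (h : ℝ × ℝ → E) : ℕ → ℝ × ℝ → A
  | 0 => fun _ => 0
  | m + 1 => fun p => Psi W h m p * PP (W m) h p

noncomputable def psiQ (W : ℕ → E → (E →L[ℝ] A)) (h : ℝ × ℝ → E) : ℕ → ℝ × ℝ → A
  | 0 => fun _ => 0
  | m + 1 => fun p => Psi W h m p * QQ (W m) h p

section PsiFacts

variable {U : Set E} {h : ℝ × ℝ → E} {W : ℕ → E → (E →L[ℝ] A)} {ε : ℝ}

/-- Green's-theorem representation of `Psi (m+1)`, given the regularity facts at level `m`. -/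
theorem psi_green (hU : IsOpen U) (hh : ContDiff ℝ (⊤ : ℕ∞) h) (hmem : ∀ p, h p ∈ U)
    (hW : ∀ n, ContDiffOn ℝ (⊤ : ℕ∞) (W n) U)
    (hrank : ∀ p : ℝ × ℝ,
      Module.finrank ℝ (LinearMap.range (fderiv ℝ h p).toLinearMap) ≤ 1)
    (hbot : ∀ x : ℝ, fderiv ℝ h (x, 0) = 0)
    (m : ℕ) (hC : Continuous (Psi W h m))
    (hD : ∀ p, HasFDerivAt (Psi W h m)
      ((ContinuousLinearMap.fst ℝ ℝ ℝ).smulRight (psiP W h m p) +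
        (ContinuousLinearMap.snd ℝ ℝ ℝ).smulRight (psiQ W h m p)) p)
    (σ u : ℝ) :
    Psi W h (m + 1) (σ, u) = Psi W h (m + 1) (0, u) +
      ∫ x in (0:ℝ)..σ, Psi W h m (x, u) * PP (W m) h (x, u) := by
  classical
  have hQc : Continuous (QQ (W m) h) := continuous_QQ hU hh hmem (hW m)
  have hPc : Continuous (PP (W m) h) := continuous_PP hU hh hmem (hW m)
  obtain ⟨qd, pd, hq, hp, hqp⟩ :
      ∃ (qd pd : ℝ × ℝ → (ℝ × ℝ →L[ℝ] A)),
        (∀ p, HasFDerivAt (QQ (W m) h) (qd p) p) ∧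
        (∀ p, HasFDerivAt (PP (W m) h) (pd p) p) ∧
        (∀ p, qd p (1, 0) = pd p (0, 1)) := by
    choose qd pd h1 h2 h3 using fun p => exists_hasFDerivAt_QQ_PP hU hh hmem (hW m) hrank p
    exact ⟨qd, pd, h1, h2, h3⟩
  set dPsi : ℝ × ℝ → (ℝ × ℝ →L[ℝ] A) := fun p =>
    (ContinuousLinearMap.fst ℝ ℝ ℝ).smulRight (psiP W h m p) +
      (ContinuousLinearMap.snd ℝ ℝ ℝ).smulRight (psiQ W h m p) with hdPsi
  set f : ℝ × ℝ → A := fun p => Psi W h m p * QQ (W m) h p with hf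
  set g : ℝ × ℝ → A := fun p => -(Psi W h m p * PP (W m) h p) with hg
  set f' : ℝ × ℝ → (ℝ × ℝ →L[ℝ] A) := fun p =>
    Psi W h m p • qd p + (dPsi p).smulRight (QQ (W m) h p) with hf'
  set g' : ℝ × ℝ → (ℝ × ℝ →L[ℝ] A) := fun p =>
    -(Psi W h m p • pd p + (dPsi p).smulRight (PP (W m) h p)) with hg'
  have Hdf : ∀ p, HasFDerivAt f (f' p) p := fun p => (hD p).mul' (hq p)
  have Hdg : ∀ p, HasFDerivAt g (g' p) p := fun p => ((hD p).mul' (hp p)).neg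
  have div0 : ∀ p, f' p (1, 0) + g' p (0, 1) = 0 := by
    intro p
    have e1 : f' p (1, 0) = Psi W h m p * qd p (1, 0) + psiP W h m p * QQ (W m) h p := by
      simp [hf', hdPsi, smul_eq_mul]
    have e2 : g' p (0, 1) = -(Psi W h m p * pd p (0, 1) + psiQ W h m p * PP (W m) h p) := by
      simp [hg', hdPsi, smul_eq_mul]
    rw [e1, e2, hqp p]
    have hcomm : psiP W h m p * QQ (W m) h p = psiQ W h m p * PP (W m) h p := by
      cases m with
      | zero => simp [psiP, psiQ]
      | succ n =>
          simp only [psiP, psiQ]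
          rw [mul_assoc, mul_assoc]
          congr 1
          exact forms_commute (hrank p) (W n) (W (n + 1)) (h p)
    rw [hcomm]
    abel
  have Hi : IntegrableOn (fun p : ℝ × ℝ => f' p (1, 0) + g' p (0, 1))
      (Set.uIcc 0 σ ×ˢ Set.uIcc 0 u) := by
    have : (fun p : ℝ × ℝ => f' p (1, 0) + g' p (0, 1)) = fun _ => 0 := funext div0
    rw [this]
    exact integrableOn_zero
  have green := integral2_divergence_prod_of_hasFDerivAt_off_countable f g f' g'
    0 0 σ u ∅ Set.countable_empty
    ((hC.mul hQc).continuousOn) ((hC.mul hPc).neg.continuousOn)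
    (fun x _ => Hdf x) (fun x _ => Hdg x) Hi
  have hzero : (∫ x in (0:ℝ)..σ, ∫ y in (0:ℝ)..u, f' (x, y) (1, 0) + g' (x, y) (0, 1)) = 0 := by
    simp [div0]
  rw [hzero] at green
  have hbdry : ∀ x : ℝ, g (x, 0) = 0 := by
    intro x
    simp [hg, PP, hbot x]
  have h1 : (∫ x in (0:ℝ)..σ, g (x, 0)) = 0 := by
    simp [hbdry]
  have h2 : (∫ y in (0:ℝ)..u, f (σ, y)) = Psi W h (m + 1) (σ, u) := rfl
  have h3 : (∫ y in (0:ℝ)..u, f (0, y)) = Psi W h (m + 1) (0, u) := rfl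
  have h4 : (∫ x in (0:ℝ)..σ, g (x, u)) = -∫ x in (0:ℝ)..σ, Psi W h m (x, u) * PP (W m) h (x, u) := by
    simp [hg, intervalIntegral.integral_neg]
  rw [h1, h2, h3, h4] at green
  have h5 : -(∫ x in (0:ℝ)..σ, Psi W h m (x, u) * PP (W m) h (x, u)) - 0
      + Psi W h (m + 1) (σ, u) - Psi W h (m + 1) (0, u) = 0 := green.symm
  have h6 := congrArg (fun z => z + Psi W h (m + 1) (0, u)
    + ∫ x in (0:ℝ)..σ, Psi W h m (x, u) * PP (W m) h (x, u)) h5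
  calc Psi W h (m + 1) (σ, u)
      = -(∫ x in (0:ℝ)..σ, Psi W h m (x, u) * PP (W m) h (x, u)) - 0
        + Psi W h (m + 1) (σ, u) - Psi W h (m + 1) (0, u) + Psi W h (m + 1) (0, u)
        + ∫ x in (0:ℝ)..σ, Psi W h m (x, u) * PP (W m) h (x, u) := by abel
    _ = 0 + Psi W h (m + 1) (0, u)
        + ∫ x in (0:ℝ)..σ, Psi W h m (x, u) * PP (W m) h (x, u) := h6
    _ = _ := by abel

theorem psi_invariant (hU : IsOpen U) (hh : ContDiff ℝ (⊤ : ℕ∞) h) (hmem : ∀ p, h p ∈ U)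
    (hW : ∀ n, ContDiffOn ℝ (⊤ : ℕ∞) (W n) U)
    (hrank : ∀ p : ℝ × ℝ,
      Module.finrank ℝ (LinearMap.range (fderiv ℝ h p).toLinearMap) ≤ 1)
    (hbot : ∀ x : ℝ, fderiv ℝ h (x, 0) = 0) (m : ℕ) :
    Continuous (Psi W h m) ∧ ∀ p, HasFDerivAt (Psi W h m)
      ((ContinuousLinearMap.fst ℝ ℝ ℝ).smulRight (psiP W h m p) +
        (ContinuousLinearMap.snd ℝ ℝ ℝ).smulRight (psiQ W h m p)) p := by
  induction m with
  | zero =>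
      refine ⟨continuous_const, fun p => ?_⟩
      have : ((ContinuousLinearMap.fst ℝ ℝ ℝ).smulRight (psiP W h 0 p) +
          (ContinuousLinearMap.snd ℝ ℝ ℝ).smulRight (psiQ W h 0 p)) = 0 :=
        ContinuousLinearMap.ext fun v => by simp [psiP, psiQ]
      rw [this]
      exact hasFDerivAt_const 1 p
  | succ m ih =>
      obtain ⟨hC, hD⟩ := ih
      have hQc : Continuous (QQ (W m) h) := continuous_QQ hU hh hmem (hW m)
      have hPc : Continuous (PP (W m) h) := continuous_PP hU hh hmem (hW m)
      have hFc : Continuous fun p : ℝ × ℝ => Psi W h m p * QQ (W m) h p := hC.mul hQc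
      have green := psi_green hU hh hmem hW hrank hbot m hC hD
      have cont1 : Continuous (Psi W h (m + 1)) := by
        have huncurry : Continuous (Function.uncurry fun s t =>
            Psi W h m (s, t) * QQ (W m) h (s, t)) := by
          exact hFc.comp (continuous_fst.prodMk continuous_snd)
        exact intervalIntegral.continuous_parametric_primitive_of_continuous huncurry
      have hcontP : Continuous (psiP W h (m + 1)) := hC.mul hPc
      have hcontQ : Continuous (psiQ W h (m + 1)) := hFc
      have ht : ∀ p : ℝ × ℝ,
          HasDerivAt (fun y => Psi W h (m + 1) (p.1, y)) (psiQ W h (m + 1) p) p.2 := by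
        intro p
        have hcont : Continuous fun t => Psi W h m (p.1, t) * QQ (W m) h (p.1, t) :=
          hFc.comp (continuous_const.prodMk continuous_id)
        have hd := intervalIntegral.integral_hasDerivAt_right
          (hcont.intervalIntegrable 0 p.2)
          (hcont.stronglyMeasurableAtFilter _ _) hcont.continuousAt
        exact hd
      have hs : ∀ p : ℝ × ℝ,
          HasDerivAt (fun x => Psi W h (m + 1) (x, p.2)) (psiP W h (m + 1) p) p.1 := by
        intro p
        have hrep : (fun x => Psi W h (m + 1) (x, p.2)) = fun x =>
            Psi W h (m + 1) (0, p.2) +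
              ∫ z in (0:ℝ)..x, Psi W h m (z, p.2) * PP (W m) h (z, p.2) :=
          funext fun x => green x p.2
        rw [hrep]
        have hcont : Continuous fun z => Psi W h m (z, p.2) * PP (W m) h (z, p.2) :=
          (hC.mul hPc).comp (continuous_id.prodMk continuous_const)
        have hd := intervalIntegral.integral_hasDerivAt_right
          (hcont.intervalIntegrable 0 p.1)
          (hcont.stronglyMeasurableAtFilter _ _) hcont.continuousAt
        exact hd.const_add _
      exact ⟨cont1, fun p => hasFDerivAt_of_partials hs ht hcontP hcontQ p⟩

/-- `Psi (m+1) (·, 1)` is constant in the `s` variable. -/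
theorem psi_top_const (hU : IsOpen U) (hh : ContDiff ℝ (⊤ : ℕ∞) h) (hmem : ∀ p, h p ∈ U)
    (hW : ∀ n, ContDiffOn ℝ (⊤ : ℕ∞) (W n) U)
    (hrank : ∀ p : ℝ × ℝ,
      Module.finrank ℝ (LinearMap.range (fderiv ℝ h p).toLinearMap) ≤ 1)
    (hbot : ∀ x : ℝ, fderiv ℝ h (x, 0) = 0)
    (htop : ∀ x : ℝ, fderiv ℝ h (x, 1) = 0) (m : ℕ) (σ : ℝ) :
    Psi W h (m + 1) (σ, 1) = Psi W h (m + 1) (0, 1) := by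
  obtain ⟨hC, hD⟩ := psi_invariant hU hh hmem hW hrank hbot m
  have green := psi_green hU hh hmem hW hrank hbot m hC hD σ 1
  have : (∫ x in (0:ℝ)..σ, Psi W h m (x, 1) * PP (W m) h (x, 1)) = 0 := by
    have hz : ∀ x : ℝ, Psi W h m (x, 1) * PP (W m) h (x, 1) = 0 := by
      intro x
      have : PP (W m) h (x, 1) = 0 := by simp [PP, htop x]
      simp [this]
    simp [hz]
  rw [green, this, add_zero]

end PsiFacts
def simplexSet (k : ℕ) (u : ℝ) : Set (Fin k → ℝ) :=
  {t | Monotone t ∧ ∀ i, t i ∈ Set.Icc (0 : ℝ) u}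

noncomputable def JJ : (k : ℕ) → (Fin k → ℝ → A) → ℝ → A
  | 0, _, _ => 1
  | k + 1, G, u =>
      ∫ x in (0:ℝ)..u, JJ k (fun i => G i.castSucc) x * G (Fin.last k) x

theorem isClosed_simplexSet (k : ℕ) (u : ℝ) : IsClosed (simplexSet k u) := by
  have h1 : IsClosed {t : Fin k → ℝ | Monotone t} := by
    have : {t : Fin k → ℝ | Monotone t} =
        ⋂ (a : Fin k) (b : Fin k) (_ : a ≤ b), {t : Fin k → ℝ | t a ≤ t b} := by
      ext t
      simp only [Set.mem_setOf_eq, Set.mem_iInter]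
      exact ⟨fun hm a b hab => hm hab, fun H a b hab => H a b hab⟩
    rw [this]
    exact isClosed_iInter fun a => isClosed_iInter fun b => isClosed_iInter fun _ =>
      isClosed_le (continuous_apply a) (continuous_apply b)
  have h2 : IsClosed {t : Fin k → ℝ | ∀ i, t i ∈ Set.Icc (0:ℝ) u} := by
    have : {t : Fin k → ℝ | ∀ i, t i ∈ Set.Icc (0:ℝ) u} =
        ⋂ i : Fin k, (fun t : Fin k → ℝ => t i) ⁻¹' Set.Icc (0:ℝ) u := by
      ext t; simp [Set.mem_iInter]
    rw [this]
    exact isClosed_iInter fun i => IsClosed.preimage (continuous_apply i) isClosed_Icc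
  exact h1.inter h2

theorem isCompact_simplexSet (k : ℕ) (u : ℝ) : IsCompact (simplexSet k u) := by
  refine IsCompact.of_isClosed_subset
    (isCompact_univ_pi fun _ : Fin k => isCompact_Icc (a := (0:ℝ)) (b := u))
    (isClosed_simplexSet k u) ?_
  intro t ht i _
  exact ht.2 i

theorem measurableSet_simplexSet (k : ℕ) (u : ℝ) : MeasurableSet (simplexSet k u) :=
  (isClosed_simplexSet k u).measurableSet

theorem snoc_mem_simplexSet_iff {k : ℕ} {u x : ℝ} {t' : Fin k → ℝ} :
    Fin.snoc t' x ∈ simplexSet (k + 1) u ↔ x ∈ Set.Icc (0:ℝ) u ∧ t' ∈ simplexSet k x := by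
  constructor
  · rintro ⟨hm, hb⟩
    have hx := hb (Fin.last k)
    rw [Fin.snoc_last] at hx
    refine ⟨hx, ?_, ?_⟩
    · intro i j hij
      have := hm (show (i.castSucc : Fin (k+1)) ≤ j.castSucc by
        simpa [Fin.castSucc_le_castSucc_iff] using hij)
      simpa [Fin.snoc_castSucc] using this
    · intro i
      constructor
      · have := (hb i.castSucc).1
        simpa [Fin.snoc_castSucc] using this
      · have := hm (Fin.le_last i.castSucc)
        simpa [Fin.snoc_castSucc, Fin.snoc_last] using this
  · rintro ⟨⟨hx0, hxu⟩, hm', hb'⟩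
    constructor
    · intro i j hij
      rcases Fin.eq_castSucc_or_eq_last j with ⟨j', rfl⟩ | rfl
      · rcases Fin.eq_castSucc_or_eq_last i with ⟨i', rfl⟩ | rfl
        · rw [Fin.snoc_castSucc, Fin.snoc_castSucc]
          exact hm' (Fin.castSucc_le_castSucc_iff.1 hij)
        · exact absurd (lt_of_le_of_lt hij (Fin.castSucc_lt_last j')) (lt_irrefl _)
      · rcases Fin.eq_castSucc_or_eq_last i with ⟨i', rfl⟩ | rfl
        · rw [Fin.snoc_castSucc, Fin.snoc_last]
          exact (hb' i').2
        · exact le_refl _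
    · intro i
      refine Fin.lastCases ?_ (fun i' => ?_) i
      · rw [Fin.snoc_last]; exact ⟨hx0, hxu⟩
      · rw [Fin.snoc_castSucc]
        exact ⟨(hb' i').1, le_trans (hb' i').2 hxu⟩

theorem continuous_simplex_integrand {k : ℕ} (G : Fin k → ℝ → A) (hG : ∀ i, Continuous (G i)) :
    Continuous fun t : Fin k → ℝ => (List.ofFn fun i => G i (t i)).prod := by
  have : (fun t : Fin k → ℝ => (List.ofFn fun i => G i (t i)).prod) =
      fun t => ((List.finRange k).map fun i => G i (t i)).prod := by
    funext t
    rw [List.ofFn_eq_map]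
  rw [this]
  exact continuous_list_prod _ fun i _ => (hG i).comp (continuous_apply i)

theorem simplex_integral_eq (k : ℕ) (G : Fin k → ℝ → A) (hG : ∀ i, Continuous (G i))
    (u : ℝ) (hu : 0 ≤ u) :
    (∫ t in simplexSet k u, (List.ofFn fun i => G i (t i)).prod) = JJ k G u := by
  induction k generalizing u with
  | zero =>
      have huniv : simplexSet 0 u = Set.univ :=
        Set.eq_univ_of_forall fun t => ⟨fun {a} => a.elim0, fun i => i.elim0⟩
      have hvol : (volume : Measure (Fin 0 → ℝ)) Set.univ = 1 := by
        rw [MeasureTheory.volume_pi, Measure.pi_univ]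
        simp
      rw [huniv]
      simp only [List.ofFn_zero, List.prod_nil]
      rw [setIntegral_const]
      rw [measureReal_def, hvol]
      simp [JJ]
  | succ k IH =>
      set F : (Fin (k + 1) → ℝ) → A := fun t => (List.ofFn fun i => G i (t i)).prod with hF
      have hFcont : Continuous F := continuous_simplex_integrand G hG
      have hS : MeasurableSet (simplexSet (k + 1) u) := measurableSet_simplexSet _ _
      have hIntOn : IntegrableOn F (simplexSet (k + 1) u) :=
        hFcont.continuousOn.integrableOn_compact (isCompact_simplexSet _ _)
      have hInd : Integrable (Set.indicator (simplexSet (k + 1) u) F) :=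
        hIntOn.integrable_indicator hS
      set e := MeasurableEquiv.piFinSuccAbove (fun _ : Fin (k + 1) => ℝ) (Fin.last k) with he
      have mp : MeasurePreserving e volume volume :=
        volume_preserving_piFinSuccAbove (fun _ : Fin (k + 1) => ℝ) (Fin.last k)
      have hsymm : ∀ (x : ℝ) (t' : Fin k → ℝ), e.symm (x, t') = Fin.snoc t' x := by
        intro x t'
        show (Fin.insertNthEquiv (fun _ : Fin (k + 1) => ℝ) (Fin.last k)) (x, t') = _
        simp [Fin.insertNthEquiv, Fin.insertNth_last']
      -- main chain
      have step1 : (∫ t in simplexSet (k + 1) u, F t) =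
          ∫ t, Set.indicator (simplexSet (k + 1) u) F t := (integral_indicator hS).symm
      have step2 : (∫ t, Set.indicator (simplexSet (k + 1) u) F t) =
          ∫ p : ℝ × (Fin k → ℝ), Set.indicator (simplexSet (k + 1) u) F (e.symm p) :=
        (((MeasurePreserving.symm e mp).integral_comp' (Set.indicator (simplexSet (k + 1) u) F))).symm
      have hIntComp : Integrable fun p : ℝ × (Fin k → ℝ) =>
          Set.indicator (simplexSet (k + 1) u) F (e.symm p) :=
        ((MeasurePreserving.symm e mp).integrable_comp_emb e.symm.measurableEmbedding).2 hInd
      have step3 : (∫ p : ℝ × (Fin k → ℝ), Set.indicator (simplexSet (k + 1) u) F (e.symm p)) =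
          ∫ x : ℝ, ∫ t' : Fin k → ℝ, Set.indicator (simplexSet (k + 1) u) F (e.symm (x, t')) := by
        rw [Measure.volume_eq_prod] at hIntComp ⊢
        exact integral_prod _ hIntComp
      have step4 : ∀ x : ℝ,
          (∫ t' : Fin k → ℝ, Set.indicator (simplexSet (k + 1) u) F (e.symm (x, t'))) =
          Set.indicator (Set.Icc (0:ℝ) u)
            (fun x => ∫ t' in simplexSet k x, F (Fin.snoc t' x)) x := by
        intro x
        by_cases hx : x ∈ Set.Icc (0:ℝ) u
        · have heq : ∀ t' : Fin k → ℝ,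
              Set.indicator (simplexSet (k + 1) u) F (e.symm (x, t')) =
              Set.indicator (simplexSet k x) (fun t' => F (Fin.snoc t' x)) t' := by
            intro t'
            rw [hsymm]
            by_cases ht : t' ∈ simplexSet k x
            · rw [Set.indicator_of_mem (snoc_mem_simplexSet_iff.2 ⟨hx, ht⟩),
                Set.indicator_of_mem ht]
            · rw [Set.indicator_of_notMem, Set.indicator_of_notMem ht]
              intro hmem
              exact ht (snoc_mem_simplexSet_iff.1 hmem).2
          rw [Set.indicator_of_mem hx]
          simp_rw [heq]
          exact integral_indicator (measurableSet_simplexSet k x)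
        · have heq : ∀ t' : Fin k → ℝ,
              Set.indicator (simplexSet (k + 1) u) F (e.symm (x, t')) = 0 := by
            intro t'
            rw [hsymm, Set.indicator_of_notMem]
            intro hmem
            exact hx (snoc_mem_simplexSet_iff.1 hmem).1
          rw [Set.indicator_of_notMem hx]
          simp_rw [heq]
          exact integral_zero _ _
      have step5 : (∫ x : ℝ, Set.indicator (Set.Icc (0:ℝ) u)
            (fun x => ∫ t' in simplexSet k x, F (Fin.snoc t' x)) x) =
          ∫ x in (0:ℝ)..u, ∫ t' in simplexSet k x, F (Fin.snoc t' x) := by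
        rw [integral_indicator measurableSet_Icc, intervalIntegral.integral_of_le hu,
          ← integral_Icc_eq_integral_Ioc]
      have hsplit : ∀ (x : ℝ) (t' : Fin k → ℝ), F (Fin.snoc t' x) =
          (List.ofFn fun i : Fin k => G i.castSucc (t' i)).prod * G (Fin.last k) x := by
        intro x t'
        have hFx : F (Fin.snoc t' x) =
            (List.ofFn fun i : Fin (k + 1) => G i (Fin.snoc (α := fun _ => ℝ) t' x i)).prod := rfl
        rw [hFx, List.ofFn_succ' (f := fun i : Fin (k + 1) => G i (Fin.snoc (α := fun _ => ℝ) t' x i)),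
          List.prod_concat]
        simp [Fin.snoc_castSucc, Fin.snoc_last]
      have step6 : ∀ x : ℝ, (∫ t' in simplexSet k x, F (Fin.snoc t' x)) =
          (∫ t' in simplexSet k x, (List.ofFn fun i : Fin k => G i.castSucc (t' i)).prod) *
            G (Fin.last k) x := by
        intro x
        simp_rw [hsplit x]
        have hI : IntegrableOn (fun t' : Fin k → ℝ =>
            (List.ofFn fun i : Fin k => G i.castSucc (t' i)).prod) (simplexSet k x) :=
          (continuous_simplex_integrand _ fun i => hG i.castSucc).continuousOn.integrableOn_compact
            (isCompact_simplexSet _ _)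
        exact ((ContinuousLinearMap.mul ℝ A).flip (G (Fin.last k) x)).integral_comp_comm hI
      have step7 : (∫ x in (0:ℝ)..u, ∫ t' in simplexSet k x, F (Fin.snoc t' x)) =
          ∫ x in (0:ℝ)..u, JJ k (fun i => G i.castSucc) x * G (Fin.last k) x := by
        apply intervalIntegral.integral_congr
        intro x hx
        rw [Set.uIcc_of_le hu] at hx
        show (∫ t' in simplexSet k x, F (Fin.snoc t' x)) =
          JJ k (fun i => G i.castSucc) x * G (Fin.last k) x
        rw [step6 x, IH (fun i => G i.castSucc) (fun i => hG i.castSucc) x hx.1]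
      calc (∫ t in simplexSet (k + 1) u, F t)
          = _ := step1
        _ = _ := step2
        _ = _ := step3
        _ = _ := by simp_rw [step4]; exact step5
        _ = _ := step7
        _ = JJ (k + 1) G u := rfl
theorem JJ_eq_Psi {h : ℝ × ℝ → E} {W : ℕ → E → (E →L[ℝ] A)} (hh : ContDiff ℝ (⊤ : ℕ∞) h)
    (c : ℝ → E) (s₀ : ℝ) (hc : ∀ t, h (s₀, t) = c t) :
    ∀ (m : ℕ) (u : ℝ),
      JJ m (fun (i : Fin m) (t : ℝ) => W i (c t) (deriv c t)) u = Psi W h m (s₀, u) := by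
  have hder : ∀ t : ℝ, deriv c t = fderiv ℝ h (s₀, t) (0, 1) := by
    intro t
    have h1 : HasFDerivAt h (fderiv ℝ h (s₀, t)) (s₀, t) :=
      ((hh.differentiable (by simp)) _).hasFDerivAt
    have h2 : HasDerivAt (fun y : ℝ => ((s₀ : ℝ), y)) ((0 : ℝ), (1 : ℝ)) t :=
      HasDerivAt.prodMk (hasDerivAt_const t s₀) (hasDerivAt_id t)
    have h3 : HasDerivAt (fun y : ℝ => h (s₀, y)) (fderiv ℝ h (s₀, t) (0, 1)) t :=
      h1.comp_hasDerivAt t h2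
    have hceq : c = fun y => h (s₀, y) := funext fun y => (hc y).symm
    rw [hceq]
    exact h3.deriv
  intro m
  induction m with
  | zero => intro u; rfl
  | succ m ih =>
      intro u
      show (∫ x in (0:ℝ)..u,
          JJ m (fun (i : Fin m) (t : ℝ) => W (i.castSucc) (c t) (deriv c t)) x *
            W (Fin.last m) (c x) (deriv c x)) = _
      have : Psi W h (m + 1) (s₀, u) =
          ∫ x in (0:ℝ)..u, Psi W h m (s₀, x) * QQ (W m) h (s₀, x) := rfl
      rw [this]
      apply intervalIntegral.integral_congr
      intro x _
      have e1 : JJ m (fun (i : Fin m) (t : ℝ) => W (i.castSucc) (c t) (deriv c t)) x =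
          Psi W h m (s₀, x) := by
        have : (fun (i : Fin m) (t : ℝ) => W (i.castSucc : ℕ) (c t) (deriv c t)) =
            fun (i : Fin m) (t : ℝ) => W i (c t) (deriv c t) := by
          funext i t
          rfl
        rw [this]
        exact ih x
      have e2 : W (Fin.last m : ℕ) (c x) (deriv c x) = QQ (W m) h (s₀, x) := by
        rw [hder x, QQ, hc x]
        rfl
      show JJ m (fun (i : Fin m) (t : ℝ) => W (i.castSucc : ℕ) (c t) (deriv c t)) x *
          W ((Fin.last m : Fin (m + 1)) : ℕ) (c x) (deriv c x) =
          Psi W h m (s₀, x) * QQ (W m) h (s₀, x)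
      rw [e1, e2]

theorem pathIterInt_eq_Psi {U : Set E} (hU : IsOpen U) {h : ℝ × ℝ → E}
    {W : ℕ → E → (E →L[ℝ] A)} (hh : ContDiff ℝ (⊤ : ℕ∞) h)
    (ω : List (E → (E →L[ℝ] A))) (hω : ∀ w ∈ ω, ContDiffOn ℝ (⊤ : ℕ∞) w U)
    (hWi : ∀ i : Fin ω.length, W (i : ℕ) = ω.get i)
    (c : ℝ → E) (hc : IsPathIn U c) (s₀ : ℝ) (hceq : ∀ t, h (s₀, t) = c t) :
    pathIterInt ω c = Psi W h ω.length (s₀, 1) := by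
  have hccd : ContDiff ℝ (⊤ : ℕ∞) c := hc.1
  have hcmem : ∀ t, c t ∈ U := hc.2.1
  have hGc : ∀ i : Fin ω.length, Continuous fun t => W (i : ℕ) (c t) (deriv c t) := by
    intro i
    rw [hWi i]
    have hcd := hω _ (ω.get_mem i)
    exact (hcd.continuousOn.comp_continuous hccd.continuous hcmem).clm_apply
      (hccd.continuous_deriv (by simp))
  have h1 : pathIterInt ω c =
      ∫ t in simplexSet ω.length 1,
        (List.ofFn fun i => W (i : ℕ) (c (t i)) (deriv c (t i))).prod := by
    unfold pathIterInt
    refine congrArg _ ?_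
    funext t
    refine congrArg List.prod (congrArg List.ofFn (funext fun i => ?_))
    rw [hWi i]
  rw [h1, simplex_integral_eq ω.length (fun i t => W (i : ℕ) (c t) (deriv c t)) hGc 1 zero_le_one,
    JJ_eq_Psi hh c s₀ hceq ω.length 1]
end Rank1Aux

/-- Rank-1 homotopy invariance of iterated integrals of 1-forms: iterated integrals of
smooth `A`-valued 1-forms along rank-1 homotopic 1-paths in `U` coincide. -/
theorem pathIterInt_rank1Homotopic_invariant (U : Set E) (hU : IsOpen U)
    (γ δ : ℝ → E) (hγ : IsPathIn U γ) (hδ : IsPathIn U δ)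
    (H : Rank1HomotopicIn U γ δ)
    (ω : List (E → (E →L[ℝ] A))) (hω : ∀ w ∈ ω, ContDiffOn ℝ (⊤ : ℕ∞) w U)
    (hk : 1 ≤ ω.length) :
    pathIterInt ω γ = pathIterInt ω δ := by
  classical
  obtain ⟨h, ⟨hh, hmem, ⟨ε, hε, hstrip0, hstrip1⟩, h0c, h1c, hrank⟩, hγeq, hδeq⟩ := H
  set W : ℕ → E → (E →L[ℝ] A) := fun n =>
    if hn : n < ω.length then ω.get ⟨n, hn⟩ else fun _ => (0 : E →L[ℝ] A) with hWdef
  have hW : ∀ n, ContDiffOn ℝ (⊤ : ℕ∞) (W n) U := by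
    intro n
    by_cases hn : n < ω.length
    · simp only [hWdef, dif_pos hn]
      exact hω _ (ω.get_mem ⟨n, hn⟩)
    · simp only [hWdef, dif_neg hn]
      exact contDiffOn_const
  have hWi : ∀ i : Fin ω.length, W (i : ℕ) = ω.get i := fun i => by
    simp only [hWdef, dif_pos i.isLt]
  have hbot : ∀ x, fderiv ℝ h (x, 0) = 0 := by
    intro x
    refine fderiv_eq_zero_strip hε (S := Set.Iio ε) isOpen_Iio hε ?_ x
    intro q hq
    calc h q = h (q.1, q.2) := rfl
      _ = h (q.1, 0) := hstrip0 q.1 q.2 (le_of_lt hq)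
      _ = h (0, 0) := h0c q.1 0
  have htop : ∀ x, fderiv ℝ h (x, 1) = 0 := by
    intro x
    refine fderiv_eq_zero_strip hε (S := Set.Ioi (1 - ε)) isOpen_Ioi (by simpa using hε) ?_ x
    intro q hq
    calc h q = h (q.1, q.2) := rfl
      _ = h (q.1, 1) := hstrip1 q.1 q.2 (le_of_lt hq)
      _ = h (0, 1) := h1c q.1 0
  have hγP := pathIterInt_eq_Psi hU (W := W) hh ω hω hWi γ hγ 0 hγeq
  have hδP := pathIterInt_eq_Psi hU (W := W) hh ω hω hWi δ hδ 1 hδeq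
  obtain ⟨m, hm⟩ : ∃ m, ω.length = m + 1 := ⟨ω.length - 1, by omega⟩
  rw [hγP, hδP, hm]
  exact (psi_top_const hU hh hmem hW hrank hbot htop m 1).symm
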